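/- Let n ≥ 3 be an integer and let z be a nonzero complex number. Then Φ_n(z) = z^{φ(n)/2} · ψ_n(z + z⁻¹), where Φ_n is the n-th cyclotomic polynomial evaluated at z, φ is Euler's totient function (φ(n) is even for n ≥ 3), and ψ_n(z + z⁻¹) denotes the evaluation at z + z⁻¹ of the minimal polynomial over ℚ of 2·cos(2π/n), regarded as a polynomial with complex coefficients. -/

import Mathlib

/-! For `n ≥ 3` the primitive `n`-th roots of unity split into pairs `{ζ, ζ⁻¹}`, and
`(z - ζ)(z - ζ⁻¹) = z (z + z⁻¹ - (ζ + ζ⁻¹))`; hence `Φ_n(z) = z^{φ(n)/2} ∏_β (z + z⁻¹ - β)`, with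
`β` running over the `φ(n)/2` values `ζ + ζ⁻¹`. These values are exactly the conjugates of
`2 cos(2π/n) = ζ₀ + ζ₀⁻¹`, `ζ₀ = e^{2πi/n}`: a `ℚ`-embedding of `ℚ(ζ₀)` sends `ζ₀` to a primitive
root, every primitive root arises this way, and every conjugate of `ζ₀ + ζ₀⁻¹` is the image under
such an embedding. So the product is `ψ_n(z + z⁻¹)`. -/

open scoped Real
open Polynomial

noncomputable section

/-- `ψ_n`: the minimal polynomial over ℚ of `2 cos(2π/n)`, regarded as a polynomial in `ℂ[t]`. -/
def psiC (n : ℕ) : ℂ[X] :=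
  (minpoly ℚ (2 * Real.cos (2 * π / n))).map (algebraMap ℚ ℂ)

open Finset IntermediateField

section AddInv

variable {K : Type*} [Field K]

theorem add_inv_eq_add_inv_iff {a b : K} (ha : a ≠ 0) (hb : b ≠ 0) :
    a + a⁻¹ = b + b⁻¹ ↔ a = b ∨ a = b⁻¹ := by
  have key : a * (a + a⁻¹ - (b + b⁻¹)) = (a - b) * (a - b⁻¹) := by
    field_simp
    ring
  rw [← sub_eq_zero, ← mul_eq_zero_iff_left ha, key, mul_eq_zero, sub_eq_zero, sub_eq_zero]

theorem sub_mul_sub_inv_eq_mul_add_inv_sub {z a : K} (hz : z ≠ 0) (ha : a ≠ 0) :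
    (z - a) * (z - a⁻¹) = z * (z + z⁻¹ - (a + a⁻¹)) := by
  field_simp
  ring

variable [DecidableEq K] {T : Finset K}

theorem filter_add_inv_eq_add_inv (hT : ∀ x ∈ T, x⁻¹ ∈ T ∧ x⁻¹ ≠ x) {a : K} (ha : a ∈ T) :
    {x ∈ T | x + x⁻¹ = a + a⁻¹} = {a, a⁻¹} := by
  have hT0 : ∀ x ∈ T, x ≠ 0 := fun x hx h => (hT x hx).2 (by simp [h])
  ext x
  simp only [mem_filter, mem_insert, mem_singleton]
  constructor
  · rintro ⟨hx, hxa⟩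
    exact (add_inv_eq_add_inv_iff (hT0 x hx) (hT0 a ha)).1 hxa
  · rintro (rfl | rfl)
    · exact ⟨ha, rfl⟩
    · exact ⟨(hT a ha).1, by rw [inv_inv, add_comm]⟩

theorem card_eq_two_mul_card_image_add_inv (hT : ∀ x ∈ T, x⁻¹ ∈ T ∧ x⁻¹ ≠ x) :
    #T = 2 * #(T.image fun x => x + x⁻¹) := by
  rw [card_eq_sum_card_image (fun x => x + x⁻¹), mul_comm, ← smul_eq_mul, ← sum_const]
  refine sum_congr rfl fun β hβ => ?_
  obtain ⟨a, ha, rfl⟩ := mem_image.1 hβ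
  rw [filter_add_inv_eq_add_inv hT ha, card_pair (hT a ha).2.symm]

theorem prod_sub_eq_pow_mul_prod_image_add_inv (hT : ∀ x ∈ T, x⁻¹ ∈ T ∧ x⁻¹ ≠ x)
    {z : K} (hz : z ≠ 0) :
    ∏ x ∈ T, (z - x) = z ^ #(T.image fun x => x + x⁻¹) *
      ∏ β ∈ T.image (fun x => x + x⁻¹), (z + z⁻¹ - β) := by
  rw [← prod_const, ← prod_mul_distrib,
    ← prod_fiberwise_of_maps_to (fun x hx => mem_image_of_mem (fun x => x + x⁻¹) hx)]
  refine prod_congr rfl fun β hβ => ?_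
  obtain ⟨a, ha, rfl⟩ := mem_image.1 hβ
  have ha0 : a ≠ 0 := fun h => (hT a ha).2 (by simp [h])
  rw [filter_add_inv_eq_add_inv hT ha, prod_pair (hT a ha).2.symm,
    sub_mul_sub_inv_eq_mul_add_inv_sub hz ha0]

end AddInv

theorem IsPrimitiveRoot.inv_ne_self {K : Type*} [Field K] {n : ℕ} (hn : 2 < n) {ζ : K}
    (hζ : IsPrimitiveRoot ζ n) : ζ⁻¹ ≠ ζ := by
  intro h
  have : n ∣ 2 := hζ.dvd_of_pow_eq_one 2 <| by
    rw [sq]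
    nth_rw 1 [← h]
    exact inv_mul_cancel₀ (hζ.ne_zero (by omega))
  have := Nat.le_of_dvd two_pos this
  omega

theorem IsPrimitiveRoot.aeval_minpoly_add_inv_eq_zero_iff {L : Type*} [Field L] [CharZero L]
    {n : ℕ} (hn : 0 < n) {ζ : L} (hζ : IsPrimitiveRoot ζ n) {β : L} :
    aeval β (minpoly ℚ (ζ + ζ⁻¹)) = 0 ↔ ∃ ξ, IsPrimitiveRoot ξ n ∧ ξ + ξ⁻¹ = β := by
  have hsplit : ∀ s ∈ ({ζ} : Set L),
      IsIntegral ℚ s ∧ ((minpoly ℚ s).map (algebraMap ℚ L)).Splits := by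
    rintro s rfl
    refine ⟨(hζ.isIntegral hn).tower_top, ?_⟩
    rw [← cyclotomic_eq_minpoly_rat hζ hn, map_cyclotomic,
      cyclotomic_eq_prod_X_sub_primitiveRoots hζ]
    exact Splits.prod fun _ _ => Splits.X_sub_C _
  have hζE : ζ ∈ ℚ⟮ζ⟯ := mem_adjoin_simple_self ℚ ζ
  constructor
  · intro hβ
    obtain ⟨φ, rfl⟩ :=
      exists_algHom_adjoin_of_splits_of_aeval hsplit (add_mem hζE (inv_mem hζE)) hβ
    refine ⟨φ ⟨ζ, hζE⟩,
      (IsPrimitiveRoot.coe_submonoidClass_iff.1 hζ).map_of_injective φ.injective, ?_⟩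
    rw [← map_inv₀, ← map_add]
    rfl
  · rintro ⟨ξ, hξ, rfl⟩
    have hξ' : aeval ξ (minpoly ℚ ζ) = 0 := by
      rw [← cyclotomic_eq_minpoly_rat hζ hn, aeval_def, eval₂_eq_eval_map, map_cyclotomic]
      exact hξ.isRoot_cyclotomic hn
    obtain ⟨φ, rfl⟩ := exists_algHom_adjoin_of_splits_of_aeval hsplit hζE hξ'
    rw [← map_inv₀, ← map_add]
    have h := minpoly.aeval ℚ (φ (⟨ζ, hζE⟩ + ⟨ζ, hζE⟩⁻¹))
    rwa [minpoly.algHom_eq φ φ.injective,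
      ← minpoly.algHom_eq ℚ⟮ζ⟯.val Subtype.val_injective] at h

theorem map_minpoly_eq_prod_X_sub_C {K L : Type*} [Field K] [CharZero K] [Field L]
    [Algebra K L] [IsAlgClosed L] {x : L} (hx : IsIntegral K x) {s : Finset L}
    (hs : ∀ β, aeval β (minpoly K x) = 0 ↔ β ∈ s) :
    (minpoly K x).map (algebraMap K L) = ∏ β ∈ s, (X - C β) := by
  have hroots : (minpoly K x).aroots L = s.val := by
    refine (Multiset.Nodup.ext (nodup_roots (minpoly.irreducible hx).separable.map) s.nodup).2
      fun β => ?_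
    rw [mem_aroots, Finset.mem_val, ← hs, and_iff_right (minpoly.ne_zero hx)]
  conv_lhs => rw [(IsAlgClosed.splits _).eq_prod_roots_of_monic ((minpoly.monic hx).map _)]
  rw [← aroots_def, hroots, prod_eq_multiset_prod]

theorem psiC_eq_map_minpoly (n : ℕ) :
    psiC n = (minpoly ℚ (Complex.exp (2 * π * Complex.I / n) +
      (Complex.exp (2 * π * Complex.I / n))⁻¹)).map (algebraMap ℚ ℂ) := by
  have hcos : ((2 * Real.cos (2 * π / n) : ℝ) : ℂ) =
      Complex.exp (2 * π * Complex.I / n) + (Complex.exp (2 * π * Complex.I / n))⁻¹ := by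
    rw [← Complex.exp_neg]
    push_cast
    rw [Complex.two_cos]
    ring_nf
  rw [psiC, ← hcos]
  congr 1
  exact (minpoly.algHom_eq (Complex.ofRealAm.restrictScalars ℚ) Complex.ofReal_injective _).symm

/-- Lehmer's identity: `Φ_n(z) = z^{φ(n)/2} ψ_n(z + z⁻¹)` for `z ≠ 0` and `n ≥ 3`. -/
theorem cyclotomic_eval_eq_pow_mul_psi_eval (n : ℕ) (hn : 3 ≤ n) (z : ℂ) (hz : z ≠ 0) :
    (Polynomial.cyclotomic n ℂ).eval z =
      z ^ (Nat.totient n / 2) * (psiC n).eval (z + z⁻¹) := by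
  have hn0 : 0 < n := by omega
  have hζ := Complex.isPrimitiveRoot_exp n hn0.ne'
  have hT : ∀ x ∈ primitiveRoots n ℂ, x⁻¹ ∈ primitiveRoots n ℂ ∧ x⁻¹ ≠ x := fun x hx =>
    have hx := (mem_primitiveRoots hn0).1 hx
    ⟨(mem_primitiveRoots hn0).2 hx.inv, hx.inv_ne_self hn⟩
  have hψ : psiC n = ∏ β ∈ (primitiveRoots n ℂ).image (fun x => x + x⁻¹), (X - C β) := by
    rw [psiC_eq_map_minpoly]
    refine map_minpoly_eq_prod_X_sub_C
      ((hζ.isIntegral hn0).add (hζ.inv.isIntegral hn0)).tower_top fun β => ?_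
    simp only [hζ.aeval_minpoly_add_inv_eq_zero_iff hn0, mem_image, mem_primitiveRoots hn0]
  have hcard := card_eq_two_mul_card_image_add_inv hT
  rw [hζ.card_primitiveRoots] at hcard
  rw [cyclotomic_eq_prod_X_sub_primitiveRoots hζ, hψ, eval_prod, eval_prod, hcard,
    Nat.mul_div_cancel_left _ two_pos]
  simp only [eval_sub, eval_X, eval_C]
  exact prod_sub_eq_pow_mul_prod_image_add_inv hT hz

end
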